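/- In the interlaced ortree, if both i and k are even, i < k, and node 2k is an ancestor of leaf 2i+1 with 2i+1 < 2k, then node 2k is an ancestor of node 2i+2, and the OR of leaf data over odd indices in (2i, 2k) of the original tree equals the OR, over odd indices t' in (i, k), of the data of internal nodes 2t' (i.e., the problem reduces to the same problem on the tree with indices halved). -/

import Mathlib

/-!
Every internal node `4q + 2` of level one is the OR of its two leaves `4q + 1` and `4q + 3`.
Hence, scanning the leaves of `(4a, 4n)` two at a time, the OR of the odd leaves of each
block `(4q, 4q + 4)` is the datum of the node `4q + 2 = 2 (2q + 1)`, and these nodes are exactly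
the nodes `2t'` with `t'` odd in `(2a, 2n)`.
-/

/-- `m` is an ortree ancestor of the index `t`. -/
def OrtreeAncestor (m t : ℕ) : Prop :=
  ∃ q s, 1 ≤ s ∧ m = q * 2 ^ (s + 1) + 2 ^ s ∧ m - 2 ^ s < t ∧ t < m + 2 ^ s

/-- Bitwise OR of `g` over all odd indices `t` with `lo < t < hi`. -/
def ortreeOr (g : ℕ → ℕ) (lo hi : ℕ) : ℕ :=
  (((List.range hi).filter (fun t => decide (lo < t) && decide (t % 2 = 1))).map g).foldr
    (· ||| ·) 0

theorem OrtreeAncestor.of_lt_of_le {m t t' : ℕ} (h : OrtreeAncestor m t) (htt' : t < t')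
    (ht'm : t' ≤ m) : OrtreeAncestor m t' := by
  obtain ⟨q, s, hs, hm, hlo, -⟩ := h
  exact ⟨q, s, hs, hm, by omega, by have := Nat.one_le_two_pow (n := s); omega⟩

theorem List.foldr_lor_append (l₁ l₂ : List ℕ) :
    (l₁ ++ l₂).foldr (· ||| ·) 0 = l₁.foldr (· ||| ·) 0 ||| l₂.foldr (· ||| ·) 0 := by
  induction l₁ with
  | nil => simp
  | cons x xs ih => simp [ih, Nat.or_assoc]

theorem ortreeOr_of_le (g : ℕ → ℕ) {lo hi : ℕ} (h : hi ≤ lo) : ortreeOr g lo hi = 0 := by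
  have hnil : (List.range hi).filter (fun t => decide (lo < t) && decide (t % 2 = 1)) = [] :=
    List.filter_eq_nil_iff.2 fun t ht => by
      have := List.mem_range.1 ht
      simp only [Bool.and_eq_true, decide_eq_true_eq]
      omega
  simp [ortreeOr, hnil]

theorem ortreeOr_succ (g : ℕ → ℕ) (lo n : ℕ) :
    ortreeOr g lo (n + 1) = ortreeOr g lo n ||| if lo < n ∧ n % 2 = 1 then g n else 0 := by
  unfold ortreeOr
  rw [List.range_succ, List.filter_append, List.map_append, List.foldr_lor_append]
  by_cases h₁ : lo < n <;> by_cases h₂ : n % 2 = 1 <;> simp [h₁, h₂]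

theorem ortreeOr_two_mul_add_two (g : ℕ → ℕ) {lo : ℕ} (m : ℕ) (h : lo ≤ 2 * m) :
    ortreeOr g lo (2 * m + 2) = ortreeOr g lo (2 * m) ||| g (2 * m + 1) := by
  rw [ortreeOr_succ, ortreeOr_succ, if_neg (by omega), if_pos (by omega), Nat.or_zero]

theorem ortreeOr_four_mul_four_mul_add_four (g : ℕ → ℕ) (q : ℕ) :
    ortreeOr g (4 * q) (4 * q + 4) = g (4 * q + 1) ||| g (4 * q + 3) := by
  rw [show 4 * q + 4 = 2 * (2 * q + 1) + 2 by ring, ortreeOr_two_mul_add_two _ _ (by omega),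
    show 2 * (2 * q + 1) = 2 * (2 * q) + 2 by ring, ortreeOr_two_mul_add_two _ _ (by omega),
    ortreeOr_of_le _ (by omega), Nat.zero_or]
  ring_nf

theorem fill_four_mul_add_two {fill : ℕ → ℕ}
    (hinv : ∀ q s, 1 ≤ s →
      fill (q * 2 ^ (s + 1) + 2 ^ s) =
        ortreeOr fill (q * 2 ^ (s + 1)) ((q + 1) * 2 ^ (s + 1))) (q : ℕ) :
    fill (4 * q + 2) = fill (4 * q + 1) ||| fill (4 * q + 3) := by
  have h := hinv q 1 le_rfl
  rw [show (q + 1) * 2 ^ (1 + 1) = 4 * q + 4 by ring, show q * 2 ^ (1 + 1) = 4 * q by ring,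
    pow_one, ortreeOr_four_mul_four_mul_add_four] at h
  exact h

theorem ortreeOr_four_mul {fill : ℕ → ℕ}
    (hfill : ∀ q, fill (4 * q + 2) = fill (4 * q + 1) ||| fill (4 * q + 3)) (a n : ℕ) :
    ortreeOr fill (4 * a) (4 * n) = ortreeOr (fun t => fill (2 * t)) (2 * a) (2 * n) := by
  induction n with
  | zero => simp [ortreeOr_of_le]
  | succ n ih =>
    by_cases han : a ≤ n
    · calc ortreeOr fill (4 * a) (4 * (n + 1))
          = ortreeOr fill (4 * a) (4 * n) ||| fill (4 * n + 1) ||| fill (4 * n + 3) := by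
            rw [show 4 * (n + 1) = 2 * (2 * n + 1) + 2 by ring,
              ortreeOr_two_mul_add_two _ _ (by omega),
              show 2 * (2 * n + 1) = 2 * (2 * n) + 2 by ring,
              ortreeOr_two_mul_add_two _ _ (by omega)]
            ring_nf
        _ = ortreeOr (fun t => fill (2 * t)) (2 * a) (2 * n) ||| fill (4 * n + 2) := by
            rw [ih, hfill, Nat.or_assoc]
        _ = ortreeOr (fun t => fill (2 * t)) (2 * a) (2 * (n + 1)) := by
            rw [mul_add, mul_one, ortreeOr_two_mul_add_two _ _ (by omega)]
            ring_nf
    · rw [ortreeOr_of_le _ (by omega), ortreeOr_of_le _ (by omega)]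

theorem ortreeOr_two_mul_of_even {fill : ℕ → ℕ}
    (hfill : ∀ q, fill (4 * q + 2) = fill (4 * q + 1) ||| fill (4 * q + 3)) {i k : ℕ}
    (hi : Even i) (hk : Even k) :
    ortreeOr fill (2 * i) (2 * k) = ortreeOr (fun t => fill (2 * t)) i k := by
  obtain ⟨a, rfl⟩ := hi
  obtain ⟨b, rfl⟩ := hk
  convert ortreeOr_four_mul hfill a b using 2 <;> ring

theorem ortree_both_even_case_general (fill : ℕ → ℕ)
    (hinv : ∀ q s, 1 ≤ s →
      fill (q * 2 ^ (s + 1) + 2 ^ s) =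
        ortreeOr fill (q * 2 ^ (s + 1)) ((q + 1) * 2 ^ (s + 1)))
    (i k : ℕ) (hi : Even i) (hk : Even k)
    (hanc : OrtreeAncestor (2 * k) (2 * i + 1)) (hlt : 2 * i + 1 < 2 * k) :
    OrtreeAncestor (2 * k) (2 * i + 2) ∧
      ortreeOr fill (2 * i) (2 * k) = ortreeOr (fun t' => fill (2 * t')) i k :=
  ⟨hanc.of_lt_of_le (by omega) (by omega),
    ortreeOr_two_mul_of_even (fill_four_mul_add_two hinv) hi hk⟩

/-- Third case of the recursion: if both `i` and `k` are even, `i < k`, and the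
node `2k` is an ancestor of the leaf `2i+1` with `2i+1 < 2k`, then `2k` is an
ancestor of the node `2i+2`, and the OR of the leaf data over odd indices in
`(2i, 2k)` equals the OR over odd indices `t'` in `(i, k)` of the data of the
internal nodes `2t'`: the problem reduces to the halved-index tree. -/
theorem ortree_both_even_case (fill : ℕ → ℕ)
    (hinv : ∀ q s, 1 ≤ s →
      fill (q * 2 ^ (s + 1) + 2 ^ s) =
        ortreeOr fill (q * 2 ^ (s + 1)) ((q + 1) * 2 ^ (s + 1)))
    (i k : ℕ) (hi : Even i) (hk : Even k) (hik : i < k)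
    (hanc : OrtreeAncestor (2 * k) (2 * i + 1)) (hlt : 2 * i + 1 < 2 * k) :
    OrtreeAncestor (2 * k) (2 * i + 2) ∧
      ortreeOr fill (2 * i) (2 * k) = ortreeOr (fun t' => fill (2 * t')) i k :=
  ortree_both_even_case_general fill hinv i k hi hk hanc hlt
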